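/- Let q be an odd prime power with q ≡ 3 (mod 4). Let X, Y ∈ F_q² with Q(X,Y) a nonzero square in F_q. Then the number of points Z ∈ F_q² such that both Q(X,Z) and Q(Y,Z) are nonzero squares equals (q² - 5)/4. -/

import Mathlib

/-!
Since `q ≡ 3 (mod 4)`, `-1` is not a square in `F`, so `F × F` carries the field structure of
`F(i) = QuadraticAlgebra F (-1) 0`, and the quadrance `Q(X, Z)` is the norm of `Z - X`.
Composing the quadratic character `χ` of `F` with the (surjective) norm gives a nontrivial
quadratic character `ψ` of `F(i)` with `ψ(-1) = 1`, and `Q(X, Z)` is a nonzero square exactly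
when `ψ(Z - X) = 1`. Expanding `∑_Z (1 + ψ(Z - X)) (1 + ψ(Z - Y))` with `∑ ψ = 0` and the
Jacobi sum `J(ψ, ψ) = -ψ(-1)` gives `q² - 1`; each `Z ∉ {X, Y}` contributes `4` or `0` and
`Z = X, Y` contribute `2` each, so `4 N + 4 = q² - 1`.
-/

open scoped Classical

def quadrance {F : Type*} [Field F] (A B : F × F) : F :=
  (B.1 - A.1) ^ 2 + (B.2 - A.2) ^ 2

open Finset

theorem quadraticChar_eq_one_iff_isSquare_and_ne_zero {F : Type*} [Field F] [Fintype F] {a : F} :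
    quadraticChar F a = 1 ↔ IsSquare a ∧ a ≠ 0 := by
  by_cases ha : a = 0
  · simp [ha]
  · rw [quadraticChar_one_iff_isSquare ha]; simp [ha]

theorem FiniteField.exists_sq_add_sq_eq {F : Type*} [Field F] [Fintype F]
    (hF : Fintype.card F % 2 = 1) (x : F) : ∃ a b : F, a ^ 2 + b ^ 2 = x := by
  open Polynomial in
  obtain ⟨a, b, hab⟩ := exists_root_sum_quadratic (f := X ^ 2) (g := X ^ 2 - C x)
    (degree_X_pow 2) (degree_X_pow_sub_C (by norm_num) x) hF
  refine ⟨a, b, ?_⟩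
  simp only [eval_sub, eval_pow, eval_X, eval_C] at hab
  linear_combination hab

namespace MulChar

def compMonoidWithZeroHom {K M R : Type*} [CommGroupWithZero K] [CommMonoidWithZero M]
    [Nontrivial M] [CommRing R] (χ : MulChar M R) (f : K →*₀ M) : MulChar K R where
  toFun x := χ (f x)
  map_one' := by simp
  map_mul' x y := by simp
  map_nonunit' x hx := by
    rw [not_not.mp (mt isUnit_iff_ne_zero.mpr hx), map_zero, χ.map_zero]

theorem IsQuadratic.compMonoidWithZeroHom {K M R : Type*} [CommGroupWithZero K]
    [CommMonoidWithZero M] [Nontrivial M] [CommRing R] {χ : MulChar M R} (hχ : χ.IsQuadratic)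
    (f : K →*₀ M) : (χ.compMonoidWithZeroHom f).IsQuadratic :=
  fun x ↦ hχ (f x)

theorem IsQuadratic.sq_apply_eq_one {K R : Type*} [CommMonoid K] [CommRing R] [Nontrivial R]
    {χ : MulChar K R} (hχ : χ.IsQuadratic) {a : K} (ha : IsUnit a) : χ a ^ 2 = 1 := by
  rcases hχ a with h | h | h
  · exact absurd h (apply_ne_zero_iff.mpr ha)
  all_goals simp [h]

section FiniteField

variable {K : Type*} [Field K] [Fintype K]

theorem IsQuadratic.sum_mul_apply_sub_eq_neg_one {R : Type*} [CommRing R] [IsDomain R]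
    {χ : MulChar K R} (hχ : χ.IsQuadratic) (hχ1 : χ ≠ 1) {w : K} (hw : w ≠ 0) :
    ∑ z, χ z * χ (z - w) = -1 := by
  have hJ : jacobiSum χ χ = -χ (-1) := by
    simpa only [hχ.inv] using jacobiSum_nontrivial_inv hχ1
  calc ∑ z, χ z * χ (z - w) = ∑ u, χ (w * u) * χ (w * u - w) :=
        (Fintype.sum_equiv (Equiv.mulLeft₀ w hw) _ _ fun _ ↦ rfl).symm
    _ = χ w ^ 2 * χ (-1) * jacobiSum χ χ := by
        rw [jacobiSum, mul_sum]
        refine sum_congr rfl fun u _ ↦ ?_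
        rw [show w * u - w = w * (-1) * (1 - u) by ring]
        simp only [map_mul]
        ring
    _ = -1 := by
        rw [hJ, hχ.sq_apply_eq_one hw.isUnit]
        linear_combination -hχ.sq_apply_eq_one isUnit_one.neg

theorem IsQuadratic.four_mul_card_add_eq_card {χ : MulChar K ℤ} (hχ : χ.IsQuadratic)
    (hχ1 : χ ≠ 1) {x y : K} (hxy : x ≠ y) :
    4 * (Nat.card {z : K // χ (z - x) = 1 ∧ χ (z - y) = 1} : ℤ) + 3 + χ (x - y) + χ (y - x)
      = Fintype.card K := by
  have hsum (a : K) : ∑ z, χ (z - a) = 0 := by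
    rw [Fintype.sum_equiv (Equiv.subRight a) (fun z ↦ χ (z - a)) χ fun _ ↦ rfl,
      sum_eq_zero_of_ne_one hχ1]
  have hcross : ∑ z, χ (z - x) * χ (z - y) = -1 := by
    rw [Fintype.sum_equiv (Equiv.subRight x) (fun z ↦ χ (z - x) * χ (z - y))
      (fun u ↦ χ u * χ (u - (y - x))) fun z ↦ by simp [sub_sub_sub_cancel_right]]
    exact hχ.sum_mul_apply_sub_eq_neg_one hχ1 (sub_ne_zero.mpr hxy.symm)
  have hpoint (z : K) : (1 + χ (z - x)) * (1 + χ (z - y)) =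
      (if χ (z - x) = 1 ∧ χ (z - y) = 1 then 4 else 0) + (if z = x then 1 + χ (x - y) else 0)
        + (if z = y then 1 + χ (y - x) else 0) := by
    by_cases hzx : z = x
    · subst hzx; simp [hxy]
    by_cases hzy : z = y
    · subst hzy; simp [hzx]
    have hsign {a : K} (ha : z ≠ a) : χ (z - a) = 1 ∨ χ (z - a) = -1 :=
      (hχ _).resolve_left (apply_ne_zero_iff.mpr (sub_ne_zero.mpr ha).isUnit)
    rcases hsign hzx with h₁ | h₁ <;> rcases hsign hzy with h₂ | h₂ <;>
      simp [h₁, h₂, hzx, hzy]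
  have := sum_congr rfl fun z (_ : z ∈ univ) ↦ hpoint z
  simp only [sum_add_distrib, sum_ite_eq', mem_univ, if_true, mul_add, add_mul, one_mul, mul_one,
    sum_const, card_univ, hsum, hcross, ← sum_filter, nsmul_eq_mul] at this
  rw [Nat.card_eq_fintype_card, Fintype.card_subtype]
  linarith

end FiniteField

end MulChar

namespace QuadraticAlgebra

instance {R : Type*} [Fintype R] {a b : R} : Fintype (QuadraticAlgebra R a b) :=
  Fintype.ofEquiv _ (equivProd a b).symm

theorem card_eq_sq {R : Type*} [Fintype R] (a b : R) :
    Fintype.card (QuadraticAlgebra R a b) = Fintype.card R ^ 2 := by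
  rw [Fintype.card_congr (equivProd a b), Fintype.card_prod, sq]

def normMonoidWithZeroHom {R : Type*} [CommRing R] {a b : R} : QuadraticAlgebra R a b →*₀ R :=
  { norm with map_zero' := norm_zero }

variable {F : Type*} [Field F]

theorem norm_neg_one_zero (z : QuadraticAlgebra F (-1) 0) : norm z = z.re ^ 2 + z.im ^ 2 := by
  rw [norm_def]; ring

theorem fact_sq_ne_neg_one (h : ¬IsSquare (-1 : F)) : Fact (∀ r : F, r ^ 2 ≠ -1 + 0 * r) :=
  ⟨fun r hr ↦ h ⟨r, by linear_combination -hr⟩⟩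

variable [Fintype F]

theorem norm_surjective (hF : Fintype.card F % 2 = 1) :
    Function.Surjective (norm : QuadraticAlgebra F (-1) 0 → F) := fun x ↦ by
  obtain ⟨a, b, hab⟩ := FiniteField.exists_sq_add_sq_eq hF x
  exact ⟨⟨a, b⟩, by rw [norm_neg_one_zero, hab]⟩

variable [Fact (∀ r : F, r ^ 2 ≠ -1 + 0 * r)]

noncomputable def normQuadraticChar : MulChar (QuadraticAlgebra F (-1) 0) ℤ :=
  (quadraticChar F).compMonoidWithZeroHom (K := QuadraticAlgebra F (-1) 0) normMonoidWithZeroHom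

theorem normQuadraticChar_apply (z : QuadraticAlgebra F (-1) 0) :
    normQuadraticChar z = quadraticChar F (norm z) := rfl

theorem isQuadratic_normQuadraticChar :
    (normQuadraticChar : MulChar (QuadraticAlgebra F (-1) 0) ℤ).IsQuadratic :=
  (quadraticChar_isQuadratic F).compMonoidWithZeroHom _

theorem normQuadraticChar_ne_one :
    (normQuadraticChar : MulChar (QuadraticAlgebra F (-1) 0) ℤ) ≠ 1 := by
  have hF : ringChar F ≠ 2 := fun h ↦ by
    obtain ⟨r, hr⟩ := FiniteField.isSquare_of_char_two h (-1)
    exact (Fact.out : ∀ r : F, r ^ 2 ≠ -1 + 0 * r) r (by rw [hr]; ring)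
  obtain ⟨c, hc⟩ := quadraticChar_exists_neg_one hF
  obtain ⟨z, rfl⟩ := norm_surjective (FiniteField.odd_card_of_char_ne_two hF) c
  have hz : z ≠ 0 := by rintro rfl; simp at hc
  intro h
  have := MulChar.one_apply (R' := ℤ) hz.isUnit
  rw [← h, normQuadraticChar_apply, hc] at this
  omega

end QuadraticAlgebra

theorem quadrance_comm {F : Type*} [Field F] (A B : F × F) : quadrance A B = quadrance B A := by
  simp only [quadrance]; ring

open QuadraticAlgebra in
theorem quadrance_eq_norm_sub {F : Type*} [Field F] (A B : F × F) :
    quadrance A B = norm ((equivProd (-1) 0).symm B - (equivProd (-1) 0).symm A) := by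
  simp [quadrance, norm_neg_one_zero]

open QuadraticAlgebra in
theorem stmt_15_general (F : Type*) [Field F] [Fintype F] (q : ℕ)
    (hcard : Fintype.card F = q) (h4 : q % 4 = 3)
    (X Y : F × F) (hsq : IsSquare (quadrance X Y)) (hne : quadrance X Y ≠ 0) :
    Nat.card {Z : F × F //
        (IsSquare (quadrance X Z) ∧ quadrance X Z ≠ 0) ∧
        (IsSquare (quadrance Y Z) ∧ quadrance Y Z ≠ 0)} = (q ^ 2 - 5) / 4 := by
  have := fact_sq_ne_neg_one (F := F) (by rw [FiniteField.isSquare_neg_one_iff, hcard, h4]; simp)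
  let e := (equivProd (-1 : F) 0).symm
  have hsq_iff (A B : F × F) : (IsSquare (quadrance A B) ∧ quadrance A B ≠ 0) ↔
      normQuadraticChar (e B - e A) = 1 := by
    rw [normQuadraticChar_apply, ← quadrance_eq_norm_sub,
      quadraticChar_eq_one_iff_isSquare_and_ne_zero]
  have hψXY := (hsq_iff X Y).mp ⟨hsq, hne⟩
  have hXY : e X ≠ e Y := fun h ↦ by
    rw [h, sub_self, MulChar.map_zero] at hψXY
    omega
  have hψYX := (hsq_iff Y X).mp ⟨quadrance_comm X Y ▸ hsq, quadrance_comm X Y ▸ hne⟩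
  have key := MulChar.IsQuadratic.four_mul_card_add_eq_card (χ := normQuadraticChar)
    isQuadratic_normQuadraticChar normQuadraticChar_ne_one hXY
  rw [hψYX, hψXY, card_eq_sq, hcard,
    ← Nat.card_congr (e.subtypeEquiv fun Z ↦ (hsq_iff X Z).and (hsq_iff Y Z))] at key
  omega

theorem stmt_15 (F : Type*) [Field F] [Fintype F] (q : ℕ)
    (hcard : Fintype.card F = q) (hodd : Odd q) (h4 : q % 4 = 3)
    (X Y : F × F) (hsq : IsSquare (quadrance X Y)) (hne : quadrance X Y ≠ 0) :
    Nat.card {Z : F × F //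
        (IsSquare (quadrance X Z) ∧ quadrance X Z ≠ 0) ∧
        (IsSquare (quadrance Y Z) ∧ quadrance Y Z ≠ 0)} = (q ^ 2 - 5) / 4 :=
  stmt_15_general F q hcard h4 X Y hsq hne
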